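/- arXiv:0804.1763 — 3 statements merged into one kernel-verified Lean document; each statement's English description precedes it below -/
import Mathlib

section
/- For all 3×3 matrices x, y over K with tr(x) = 0 and tr(y) = 0, the pseudo-octonion product satisfies (x∗y)∗x = (1/6)·tr(x²)·y and x∗(y∗x) = (1/6)·tr(x²)·y. (That is, the pseudo-octonion algebra is a symmetric composition algebra with norm q(x) = (1/6)tr(x²).) -/
/-!
Expanding the definition, `(x∗y)∗x` and `x∗(y∗x)` agree up to a multiple of `I₃` with
`μ(1−μ)(x²y + yx²) + (μ² + (1−μ)²)xyx − (1/3)tr(xy)x`. Since `ω² + ω + 1 = 0`, the choice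
`μ = (1−ω)/3` gives `μ(1−μ) = μ² + (1−μ)² = 1/3`, and the polarized Cayley–Hamilton identity for
traceless `3 × 3` matrices turns this expression into `(1/6)tr(x²)y` plus a multiple of `I₃`.
Both `∗`-products and `y` are traceless, so in characteristic zero that multiple of `I₃` is zero.
-/

/-- The product of the pseudo-octonion algebra on `3 × 3` matrices:
`x ∗ y = μ·xy + (1−μ)·yx − (1/3)·tr(xy)·I₃`. -/
noncomputable def pstar (K : Type*) [Field K] (μ : K)
    (x y : Matrix (Fin 3) (Fin 3) K) : Matrix (Fin 3) (Fin 3) K :=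
  μ • (x * y) + (1 - μ) • (y * x) - ((x * y).trace / 3) • (1 : Matrix (Fin 3) (Fin 3) K)

open Matrix

theorem sq_add_self_add_one_eq_zero {R : Type*} [CommRing R] [NoZeroDivisors R] {ω : R}
    (hω1 : ω ≠ 1) (hω3 : ω ^ 3 = 1) : ω ^ 2 + ω + 1 = 0 := by
  have h : (ω - 1) * (ω ^ 2 + ω + 1) = 0 := by linear_combination hω3
  exact (mul_eq_zero.mp h).resolve_left (sub_ne_zero.mpr hω1)

/-- The derivative of Cayley–Hamilton `x³ = (1/2)tr(x²)x + det(x)I₃` for traceless `x`,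
in the direction of a traceless `y`. -/
theorem Matrix.polarized_cayleyHamilton_fin_three {R : Type*} [CommRing R]
    {x y : Matrix (Fin 3) (Fin 3) R} (hx : x.trace = 0) (hy : y.trace = 0) :
    2 • (x * x * y + x * y * x + y * (x * x)) =
      (2 * (x * y).trace) • x + (2 * (x * x * y).trace) • 1 + (x * x).trace • y := by
  rw [trace_fin_three] at hx hy
  have hx22 : x 2 2 = -(x 0 0 + x 1 1) := by linear_combination hx
  have hy22 : y 2 2 = -(y 0 0 + y 1 1) := by linear_combination hy
  ext i j
  fin_cases i <;> fin_cases j <;>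
    simp [mul_apply, Fin.sum_univ_three, trace_fin_three, hx22, hy22] <;> ring

theorem Matrix.eq_of_eq_add_smul_one_of_trace_eq {n R : Type*} [Fintype n] [DecidableEq n]
    [CommRing R] [NoZeroDivisors R] (hn : (Fintype.card n : R) ≠ 0) {a b : Matrix n n R} {c : R}
    (h : a = b + c • 1) (htr : a.trace = b.trace) : a = b := by
  have hc : c = 0 := by
    rw [h, trace_add, trace_smul, trace_one, smul_eq_mul, add_eq_left] at htr
    exact (mul_eq_zero.mp htr).resolve_right hn
  simpa [hc] using h

section

variable {K : Type*} [Field K]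

theorem trace_pstar (h3 : (3 : K) ≠ 0) (μ : K) (x y : Matrix (Fin 3) (Fin 3) K) :
    (pstar K μ x y).trace = 0 := by
  rw [pstar, trace_sub, trace_add, trace_smul, trace_smul, trace_smul, trace_one,
    trace_mul_comm y x, Fintype.card_fin]
  simp only [smul_eq_mul]
  field_simp
  ring

def pstarSandwich (μ : K) (x y : Matrix (Fin 3) (Fin 3) K) : Matrix (Fin 3) (Fin 3) K :=
  (μ * (1 - μ)) • (x * x * y + y * (x * x)) + (μ ^ 2 + (1 - μ) ^ 2) • (x * y * x)
    - ((x * y).trace / 3) • x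

theorem pstar_pstar_left (μ : K) (x y : Matrix (Fin 3) (Fin 3) K) :
    pstar K μ (pstar K μ x y) x =
      pstarSandwich μ x y - ((pstar K μ x y * x).trace / 3) • 1 := by
  simp only [pstar, pstarSandwich, Matrix.add_mul, Matrix.sub_mul, Matrix.smul_mul,
    Matrix.mul_add, Matrix.mul_sub, Matrix.mul_smul, Matrix.one_mul, Matrix.mul_one,
    Matrix.mul_assoc]
  module

theorem pstar_pstar_right (μ : K) (x y : Matrix (Fin 3) (Fin 3) K) :
    pstar K μ x (pstar K μ y x) =
      pstarSandwich μ x y - ((x * pstar K μ y x).trace / 3) • 1 := by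
  simp only [pstar, pstarSandwich, Matrix.add_mul, Matrix.sub_mul, Matrix.smul_mul,
    Matrix.mul_add, Matrix.mul_sub, Matrix.mul_smul, Matrix.one_mul, Matrix.mul_one,
    Matrix.mul_assoc, trace_mul_comm y x]
  module

theorem pstarSandwich_eq [CharZero K] {μ : K} (hμ : μ * (1 - μ) = 1 / 3)
    {x y : Matrix (Fin 3) (Fin 3) K} (hx : x.trace = 0) (hy : y.trace = 0) :
    pstarSandwich μ x y = ((x * x).trace / 6) • y + ((x * x * y).trace / 3) • 1 := by
  have hμ' : μ ^ 2 + (1 - μ) ^ 2 = 1 / 3 := by linear_combination (-2) * hμ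
  rw [pstarSandwich, hμ, hμ']
  linear_combination (norm := module) (1 / 6 : K) • polarized_cayleyHamilton_fin_three hx hy

end

/-- The pseudo-octonion algebra is a symmetric composition algebra with norm
`q(x) = (1/6)·tr(x²)`: for trace-zero `x, y` one has `(x∗y)∗x = q(x)·y = x∗(y∗x)`. -/
theorem pseudoOctonion_symmetric_composition
    (K : Type*) [Field K] [CharZero K] (ω : K) (hω1 : ω ≠ 1) (hω3 : ω ^ 3 = 1)
    (x y : Matrix (Fin 3) (Fin 3) K) (hx : x.trace = 0) (hy : y.trace = 0) :
    pstar K ((1 - ω) / 3) (pstar K ((1 - ω) / 3) x y) x = ((x * x).trace / 6) • y ∧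
      pstar K ((1 - ω) / 3) x (pstar K ((1 - ω) / 3) y x) = ((x * x).trace / 6) • y := by
  have hμ : (1 - ω) / 3 * (1 - (1 - ω) / 3) = 1 / 3 := by
    linear_combination (-1 / 9 : K) * sq_add_self_add_one_eq_zero hω1 hω3
  have hsandwich := pstarSandwich_eq hμ hx hy
  have hcard : (Fintype.card (Fin 3) : K) ≠ 0 := by simp
  have htr : (((x * x).trace / 6) • y).trace = 0 := by rw [trace_smul, hy, smul_zero]
  constructor
  · exact eq_of_eq_add_smul_one_of_trace_eq hcard
      (by rw [pstar_pstar_left, hsandwich, add_sub_assoc, ← sub_smul])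
      (by rw [trace_pstar three_ne_zero, htr])
  · exact eq_of_eq_add_smul_one_of_trace_eq hcard
      (by rw [pstar_pstar_right, hsandwich, add_sub_assoc, ← sub_smul])
      (by rw [trace_pstar three_ne_zero, htr])
end

section
/- The subgroup of the group of K-linear automorphisms of the space of 3×3 matrices over K generated by the conjugation maps In(p₁) : x ↦ p₁xp₁⁻¹ and In(p₂) : x ↦ p₂xp₂⁻¹ is abelian of order 9, with both generators of order exactly 3 (i.e. it is isomorphic to ℤ₃ × ℤ₃). -/
/-- The cyclic permutation matrix `p₁` with rows `(0,0,1), (1,0,0), (0,1,0)`. -/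
def P1 (K : Type*) [Field K] : Matrix (Fin 3) (Fin 3) K :=
  !![0, 0, 1; 1, 0, 0; 0, 1, 0]

/-- The diagonal matrix `p₂ = diag(1, ω, ω²)`. -/
def P2 (K : Type*) [Field K] (ω : K) : Matrix (Fin 3) (Fin 3) K :=
  !![1, 0, 0; 0, ω, 0; 0, 0, ω ^ 2]

/-- The conjugation map `In(p) : x ↦ p·x·p⁻¹` as a `K`-linear automorphism of the
space of `3 × 3` matrices over `K`. -/
noncomputable def conjLin {K : Type*} [Field K] (p : Matrix (Fin 3) (Fin 3) K)
    [Invertible p] : Matrix (Fin 3) (Fin 3) K ≃ₗ[K] Matrix (Fin 3) (Fin 3) K where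
  toFun x := p * x * ⅟p
  invFun x := ⅟p * x * p
  map_add' x y := by simp only [mul_add, add_mul]
  map_smul' c x := by
    simp only [RingHom.id_apply, mul_smul_comm, smul_mul_assoc]
  left_inv x := by
    simp only [← mul_assoc]
    rw [invOf_mul_self, one_mul, mul_assoc, invOf_mul_self, mul_one]
  right_inv x := by
    simp only [← mul_assoc]
    rw [mul_invOf_self, one_mul, mul_assoc, mul_invOf_self, mul_one]

/-! Both conjugations have order 3 because `p₁³ = p₂³ = 1`, and they commute because
`p₂ p₁ = ω • p₁ p₂` differs from `p₁ p₂` by a scalar. The same relation gives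
`In(p₂)(p₁) = ω • p₁ ≠ p₁`, whereas every power of `In(p₁)` fixes `p₁`; so `In(p₂) ∉ ⟨In(p₁)⟩`,
the two cyclic subgroups of prime order meet trivially, and the generated group is their
internal direct product, of order `3 · 3`. -/

namespace Subgroup

variable {G : Type*} [Group G]

theorem disjoint_zpowers_of_notMem {a b : G} (hb : (orderOf b).Prime) (hba : b ∉ zpowers a) :
    Disjoint (zpowers a) (zpowers b) := by
  have : Finite (zpowers b) := Nat.finite_of_card_ne_zero (Nat.card_zpowers b ▸ hb.ne_zero)
  have hdvd : Nat.card ↥(zpowers a ⊓ zpowers b) ∣ orderOf b :=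
    Nat.card_zpowers b ▸ card_dvd_of_le inf_le_right
  rw [disjoint_iff]
  rcases hb.eq_one_or_self_of_dvd _ hdvd with h | h
  · exact card_eq_one.mp h
  · have hinf : zpowers a ⊓ zpowers b = zpowers b :=
      eq_of_le_of_card_ge inf_le_right (by rw [h, Nat.card_zpowers])
    exact absurd ((hinf ▸ inf_le_left : zpowers b ≤ zpowers a) (mem_zpowers b)) hba

theorem card_closure_pair_of_commute {a b : G} (hab : Commute a b)
    (hdisj : Disjoint (zpowers a) (zpowers b)) :
    Nat.card (closure {a, b}) = orderOf a * orderOf b := by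
  let f := (zpowers a).subtype.noncommCoprod (zpowers b).subtype fun x y => by
    obtain ⟨i, hi⟩ := x.2
    obtain ⟨j, hj⟩ := y.2
    simpa [← hi, ← hj] using hab.zpow_zpow i j
  have hf : Function.Injective f := (MonoidHom.noncommCoprod_injective _ _ _).mpr
    ⟨subtype_injective _, subtype_injective _, by simpa only [range_subtype] using hdisj⟩
  have hrange : f.range = closure {a, b} := by
    rw [MonoidHom.noncommCoprod_range, range_subtype, range_subtype, zpowers_eq_closure,
      zpowers_eq_closure, ← closure_union, Set.singleton_union]
  rw [← hrange, ← Nat.card_congr (MonoidHom.ofInjective hf).toEquiv, Nat.card_prod,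
    Nat.card_zpowers, Nat.card_zpowers]

theorem mul_comm_of_mem_closure_pair {a b : G} (hab : Commute a b) {x y : G}
    (hx : x ∈ closure {a, b}) (hy : y ∈ closure {a, b}) : x * y = y * x := by
  have hcomm : ∀ x ∈ ({a, b} : Set G), ∀ y ∈ ({a, b} : Set G), x * y = y * x := by
    rintro x (rfl | rfl) y (rfl | rfl) <;> first | rfl | exact hab | exact hab.symm
  exact Set.centralizer_centralizer_comm_of_comm hcomm _
    (closure_le_centralizer_centralizer _ hx) _ (closure_le_centralizer_centralizer _ hy)

end Subgroup

section conjLin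

variable {K : Type*} [Field K] {p q : Matrix (Fin 3) (Fin 3) K} [Invertible p]

theorem conjLin_apply (x : Matrix (Fin 3) (Fin 3) K) : conjLin p x = p * x * ⅟p := rfl

theorem conjLin_pow_apply (n : ℕ) (x : Matrix (Fin 3) (Fin 3) K) :
    (conjLin p ^ n) x = p ^ n * x * ⅟p ^ n := by
  induction n with
  | zero => simp
  | succ n ih =>
    rw [pow_succ', LinearEquiv.mul_apply, ih, conjLin_apply, pow_succ', pow_succ]
    noncomm_ring

theorem conjLin_pow_eq_one {n : ℕ} (h : p ^ n = 1) : conjLin p ^ n = 1 := by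
  have h' : ⅟p ^ n = 1 := left_inv_eq_right_inv
    (by rw [← (Commute.invOf_left (Commute.refl p)).mul_pow, invOf_mul_self, one_pow])
    (by rw [mul_one, h])
  ext x : 1
  rw [conjLin_pow_apply, h, h', one_mul, mul_one]
  rfl

theorem conjLin_apply_self : conjLin p p = p := by
  rw [conjLin_apply, mul_assoc, mul_invOf_self, mul_one]

theorem conjLin_apply_of_mul_eq_smul_mul {c : K} (h : p * q = c • (q * p)) :
    conjLin p q = c • q := by
  rw [conjLin_apply, h, smul_mul_assoc, mul_assoc, mul_invOf_self, mul_one]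

theorem commute_conjLin_of_mul_eq_smul_mul [Invertible q] {c : K} (h : p * q = c • (q * p)) :
    Commute (conjLin p) (conjLin q) := by
  have hinv : c • (⅟q * ⅟p) = ⅟p * ⅟q := by
    refine left_inv_eq_right_inv (a := q * p) ?_ (by simp [← mul_assoc])
    rw [smul_mul_assoc, ← mul_smul_comm, ← h]
    simp [← mul_assoc]
  ext x : 1
  simp only [LinearEquiv.mul_apply, conjLin_apply]
  calc p * (q * x * ⅟q) * ⅟p = (c • (q * p)) * x * (⅟q * ⅟p) := by rw [← h]; noncomm_ring
    _ = q * p * x * (c • (⅟q * ⅟p)) := by simp only [smul_mul_assoc, mul_smul_comm]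
    _ = q * (p * x * ⅟p) * ⅟q := by rw [hinv]; noncomm_ring

theorem conjLin_notMem_zpowers [Invertible q] {c : K} (h : p * q = c • (q * p)) (hc : c ≠ 1) :
    conjLin p ∉ Subgroup.zpowers (conjLin q) := by
  have hle : Subgroup.zpowers (conjLin q) ≤ MulAction.stabilizer _ q :=
    Subgroup.zpowers_le.mpr conjLin_apply_self
  intro hp
  have hfix : c • q = (1 : K) • q := by
    rw [one_smul, ← conjLin_apply_of_mul_eq_smul_mul h]
    exact hle hp
  exact hc (smul_left_injective K (Invertible.ne_zero q) hfix)

end conjLin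

section matrices

variable {K : Type*} [Field K]

theorem P1_pow_three : P1 K ^ 3 = 1 := by
  rw [pow_three, P1, Matrix.mul_fin_three, Matrix.mul_fin_three, Matrix.one_fin_three]
  norm_num

theorem P2_pow_three {ω : K} (hω3 : ω ^ 3 = 1) : P2 K ω ^ 3 = 1 := by
  rw [pow_three, P2, Matrix.mul_fin_three, Matrix.mul_fin_three, Matrix.one_fin_three]
  simp only [mul_one, mul_zero, add_zero, zero_mul, zero_add, EmbeddingLike.apply_eq_iff_eq,
    Matrix.vecCons_inj, and_true, true_and]
  exact ⟨by linear_combination hω3, by linear_combination (ω ^ 3 + 1) * hω3⟩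

theorem P2_mul_P1 {ω : K} (hω3 : ω ^ 3 = 1) : P2 K ω * P1 K = ω • (P1 K * P2 K ω) := by
  rw [P1, P2, Matrix.mul_fin_three, Matrix.mul_fin_three, Matrix.smul_of]
  simp only [mul_zero, mul_one, add_zero, zero_add, zero_mul, one_mul, Matrix.smul_cons,
    smul_eq_mul, Matrix.smul_empty, EmbeddingLike.apply_eq_iff_eq, Matrix.vecCons_inj, and_true,
    true_and]
  exact ⟨by linear_combination -hω3, by ring⟩

theorem P1_mul_P2 {ω : K} (hω3 : ω ^ 3 = 1) : P1 K * P2 K ω = ω ^ 2 • (P2 K ω * P1 K) := by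
  rw [P2_mul_P1 hω3, smul_smul, ← pow_succ, hω3, one_smul]

end matrices

theorem conj_subgroup_Z3_Z3_general (K : Type*) [Field K]
    (ω : K) (hω1 : ω ≠ 1) (hω3 : ω ^ 3 = 1)
    [Invertible (P1 K)] [Invertible (P2 K ω)] :
    (∀ a ∈ Subgroup.closure {conjLin (P1 K), conjLin (P2 K ω)},
      ∀ b ∈ Subgroup.closure {conjLin (P1 K), conjLin (P2 K ω)}, a * b = b * a) ∧
    Nat.card (Subgroup.closure {conjLin (P1 K), conjLin (P2 K ω)}) = 9 ∧
    orderOf (conjLin (P1 K)) = 3 ∧ orderOf (conjLin (P2 K ω)) = 3 := by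
  have hω2 : ω ^ 2 ≠ 1 := fun h => hω1 (by linear_combination hω3 - ω * h)
  have hB_notMem : conjLin (P2 K ω) ∉ Subgroup.zpowers (conjLin (P1 K)) :=
    conjLin_notMem_zpowers (P2_mul_P1 hω3) hω1
  have hA_notMem : conjLin (P1 K) ∉ Subgroup.zpowers (conjLin (P2 K ω)) :=
    conjLin_notMem_zpowers (P1_mul_P2 hω3) hω2
  have hA : orderOf (conjLin (P1 K)) = 3 := orderOf_eq_prime
    (conjLin_pow_eq_one P1_pow_three) fun h => hA_notMem (h ▸ one_mem _)
  have hB : orderOf (conjLin (P2 K ω)) = 3 := orderOf_eq_prime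
    (conjLin_pow_eq_one (P2_pow_three hω3)) fun h => hB_notMem (h ▸ one_mem _)
  have hcomm := commute_conjLin_of_mul_eq_smul_mul (P1_mul_P2 hω3)
  refine ⟨fun a ha b hb => Subgroup.mul_comm_of_mem_closure_pair hcomm ha hb, ?_, hA, hB⟩
  rw [Subgroup.card_closure_pair_of_commute hcomm
    (Subgroup.disjoint_zpowers_of_notMem (by rw [hB]; exact Nat.prime_three) hB_notMem), hA, hB]

/-- The subgroup of the `K`-linear automorphism group of `M₃(K)` generated by the
conjugation maps `In(p₁)` and `In(p₂)` is abelian of order `9`, with both generators of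
order exactly `3`; i.e. it is isomorphic to `ℤ₃ × ℤ₃`. -/
theorem conj_subgroup_Z3_Z3 (K : Type*) [Field K] [CharZero K]
    (ω : K) (hω1 : ω ≠ 1) (hω3 : ω ^ 3 = 1)
    [Invertible (P1 K)] [Invertible (P2 K ω)] :
    (∀ a ∈ Subgroup.closure {conjLin (P1 K), conjLin (P2 K ω)},
      ∀ b ∈ Subgroup.closure {conjLin (P1 K), conjLin (P2 K ω)}, a * b = b * a) ∧
    Nat.card (Subgroup.closure {conjLin (P1 K), conjLin (P2 K ω)}) = 9 ∧
    orderOf (conjLin (P1 K)) = 3 ∧ orderOf (conjLin (P2 K ω)) = 3 :=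
  conj_subgroup_Z3_Z3_general K ω hω1 hω3
end

section
/- Let G be a group, θ ∈ G with θ³ = 1, and H a subgroup of G such that every element of H commutes with θ and the centralizer of θ in G is contained in H ∪ Hθ ∪ Hθ². Let Q be a subgroup of H that equals its own centralizer in H (i.e. Q is abelian and every element of H commuting with all of Q lies in Q). Then every element g ∈ G that commutes with θ and with every element of Q belongs to the subgroup of G generated by Q ∪ {θ}. (Group-theoretic content of: for any maximal quasitorus Q of Aut(S), the group generated by Q and the triality element θ_S is a maximal quasitorus of Aut(𝔡₄).) -/
open scoped Pointwise

/-!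
The centralizer of `θ` is covered by the cosets `H`, `Hθ`, `Hθ²`, so `g = h t` with `h ∈ H` and
`t ∈ {1, θ, θ²}`. Both `g` and `t` centralize `Q` (the latter because `Q ≤ H` commutes with `θ`),
hence so does `h = g t⁻¹`; self-centralizing forces `h ∈ Q`, and `g = h t ∈ ⟨Q, θ⟩`.
-/

section

variable {G : Type*} [Group G]

theorem Set.mul_inv_mem_of_mem_mul_singleton {s : Set G} {g t : G} (hg : g ∈ s * {t}) :
    g * t⁻¹ ∈ s := by
  obtain ⟨h, hh, rfl⟩ := Set.mul_singleton (s := s) ▸ hg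
  simpa using hh

theorem Subgroup.mul_inv_mem_of_mem_centralizer {H Q : Subgroup G}
    (hQsc : ∀ h ∈ H, (∀ q ∈ Q, h * q = q * h) → h ∈ Q) {g t : G}
    (hg : g ∈ Subgroup.centralizer (Q : Set G)) (ht : t ∈ Subgroup.centralizer (Q : Set G))
    (hgt : g ∈ (H : Set G) * {t}) : g * t⁻¹ ∈ Q :=
  hQsc _ (Set.mul_inv_mem_of_mem_mul_singleton hgt) fun q hq =>
    (mul_mem hg (inv_mem ht) q hq).symm

end

open Subgroup

theorem mixing_with_triality_maximal_general {G : Type*} [Group G]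
    (θ : G)
    (H : Subgroup G) (hHθ : ∀ h ∈ H, h * θ = θ * h)
    (hcent : ∀ g : G, g * θ = θ * g →
      g ∈ (H : Set G) ∪ (H : Set G) * {θ} ∪ (H : Set G) * {θ ^ 2})
    (Q : Subgroup G) (hQH : Q ≤ H)
    (hQsc : ∀ h ∈ H, (∀ q ∈ Q, h * q = q * h) → h ∈ Q)
    (g : G) (hgθ : g * θ = θ * g) (hgQ : ∀ q ∈ Q, g * q = q * g) :
    g ∈ Subgroup.closure ((Q : Set G) ∪ {θ}) := by
  set K := closure ((Q : Set G) ∪ {θ})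
  have hθ : θ ∈ K ⊓ centralizer (Q : Set G) :=
    ⟨Subgroup.subset_closure (Or.inr rfl), fun q hq => hHθ q (hQH hq)⟩
  suffices key : ∀ t ∈ K ⊓ centralizer (Q : Set G), g ∈ (H : Set G) * {t} → g ∈ K by
    rcases hcent g hgθ with (hg | hg) | hg
    · exact key 1 (one_mem _) (by simpa using hg)
    · exact key θ hθ hg
    · exact key (θ ^ 2) (pow_mem hθ 2) hg
  rintro t ⟨htK, htQ⟩ hg
  have hgt : g * t⁻¹ ∈ Q := mul_inv_mem_of_mem_centralizer hQsc
    (fun q hq => (hgQ q hq).symm) htQ hg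
  have hgtK : g * t⁻¹ ∈ K := Subgroup.subset_closure (Set.mem_union_left {θ} hgt)
  simpa only [inv_mul_cancel_right] using mul_mem hgtK htK

/-- Group-theoretic content of Corollary: if `θ³ = 1`, `H` centralizes `θ`, the centralizer
of `θ` in `G` is contained in `H ∪ Hθ ∪ Hθ²`, and `Q` is a self-centralizing abelian
subgroup of `H`, then any `g ∈ G` commuting with `θ` and with all of `Q` lies in the
subgroup generated by `Q` and `θ`. (Hence `⟨Q, θ⟩` is a maximal abelian subgroup.) -/
theorem mixing_with_triality_maximal {G : Type*} [Group G]
    (θ : G) (hθ : θ ^ 3 = 1)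
    (H : Subgroup G) (hHθ : ∀ h ∈ H, h * θ = θ * h)
    (hcent : ∀ g : G, g * θ = θ * g →
      g ∈ (H : Set G) ∪ (H : Set G) * {θ} ∪ (H : Set G) * {θ ^ 2})
    (Q : Subgroup G) (hQH : Q ≤ H)
    (hQab : ∀ a ∈ Q, ∀ b ∈ Q, a * b = b * a)
    (hQsc : ∀ h ∈ H, (∀ q ∈ Q, h * q = q * h) → h ∈ Q)
    (g : G) (hgθ : g * θ = θ * g) (hgQ : ∀ q ∈ Q, g * q = q * g) :
    g ∈ Subgroup.closure ((Q : Set G) ∪ {θ}) :=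
  mixing_with_triality_maximal_general θ H hHθ hcent Q hQH hQsc g hgθ hgQ
end
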